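/- arXiv:1701.04367 — 4 statements merged into one kernel-verified Lean document; each statement's English description precedes it below -/
import Mathlib

section
/- Let S ≥ 1 be an integer and p(0), …, p(S) reals with p(i) > 0 for every i and Σ_{k=0}^S p(k) = 1. Let Σ₀ be the (S+1)×(S+1) real matrix with entry (i+1, j+1) equal to 1_{i=j} p(i) − p(i)p(j) for i, j = 0, …, S, and let λ ∈ ℝ^{S+1} be the vector all of whose components equal 1. Then the kernel of Σ₀ (equivalently, the kernel of the linear map x ↦ Σ₀ x) is exactly the one-dimensional linear subspace of ℝ^{S+1} spanned by λ. -/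
/-- If `p 0, …, p S` are positive reals summing to 1 (`S ≥ 1`),
and `Σ₀` is the matrix with entries `Σ₀ i j = 1_{i=j} p i − p i * p j`, then
the kernel of `x ↦ Σ₀ x` is exactly the span of the all-ones vector `λ`. -/
theorem sigma_kernel
    (S : ℕ) (hS : 1 ≤ S) (p : Fin (S + 1) → ℝ)
    (hp_pos : ∀ i, 0 < p i) (hp_sum : ∑ k, p k = 1) :
    LinearMap.ker (Matrix.of fun i j : Fin (S + 1) =>
        (if i = j then p i else 0) - p i * p j).mulVecLin =
      Submodule.span ℝ {(fun _ => 1 : Fin (S + 1) → ℝ)} := by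
  ext x
  rw [LinearMap.mem_ker, Submodule.mem_span_singleton]
  have key : ∀ (y : Fin (S+1) → ℝ) (i : Fin (S+1)),
      (Matrix.of fun i j : Fin (S + 1) =>
        (if i = j then p i else 0) - p i * p j).mulVec y i
      = p i * y i - p i * ∑ j, p j * y j := by
    intro y i
    simp only [Matrix.mulVec, dotProduct, Matrix.of_apply, sub_mul,
      ite_mul, zero_mul]
    rw [Finset.sum_sub_distrib, Finset.sum_ite_eq (Finset.univ) i (fun j => p i * y j)]
    simp [Finset.mul_sum, mul_assoc]
  constructor
  · intro h
    refine ⟨∑ j, p j * x j, funext fun i => ?_⟩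
    have hi : (Matrix.of fun i j : Fin (S + 1) =>
        (if i = j then p i else 0) - p i * p j).mulVecLin x i = 0 := by
      rw [h]; rfl
    rw [Matrix.mulVecLin_apply, key] at hi
    have := (hp_pos i).ne'
    have : x i = ∑ j, p j * x j :=
      mul_left_cancel₀ (hp_pos i).ne' (sub_eq_zero.mp hi)
    simp [Pi.smul_apply, smul_eq_mul, this.symm]
  · rintro ⟨c, rfl⟩
    ext i
    rw [Matrix.mulVecLin_apply, key]
    simp only [Pi.smul_apply, Pi.one_apply, smul_eq_mul, mul_one, Pi.zero_apply]
    rw [← Finset.sum_mul, hp_sum]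
    ring
end

section
/- Let S ≥ 3 be an integer. Let B be the S × (S+1) real matrix whose j-th row, for j = 1, …, S−1, has entries 1, −2, 1 in columns j, j+1, j+2 respectively and zeros elsewhere, and whose S-th row has all entries zero except the entries in columns S and S+1, which equal 1 and −2 respectively. Let λ ∈ ℝ^{S+1} be the vector all of whose components equal 1. If μ ∈ ℝ^S and a ∈ ℝ satisfy Bᵀ μ = a λ, then a = 0 and μ = 0. -/
lemma sum_ite_shift (S m c : ℕ) (f : Fin S → ℝ) :
    ∑ i : Fin S, (if m = (i : ℕ) + c then f i else 0) =
    if h : c ≤ m ∧ m - c < S then f ⟨m - c, h.2⟩ else 0 := by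
  split
  case isTrue h =>
    rw [Finset.sum_eq_single (⟨m - c, h.2⟩ : Fin S)]
    · rw [if_pos]; simp; omega
    · intro i _ hne
      rw [if_neg]
      intro hm
      exact hne (Fin.ext (by simp; omega))
    · simp
  case isFalse h =>
    apply Finset.sum_eq_zero
    intro i _
    rw [if_neg]
    omega

/-- Let `S ≥ 3` and `B` the `S × (S+1)` second-difference matrix:
row `j` (for `j = 1, …, S−1`, here 0-indexed as `i = j − 1`) has entries
`1, −2, 1` in (1-indexed) columns `j, j+1, j+2` and zeros elsewhere; row `S`
is zero except for entries `1` and `−2` in columns `S` and `S+1`. If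
`Bᵀ μ = a λ` with `λ` the all-ones vector, then `a = 0` and `μ = 0`. -/
theorem transpose_B_injective
    (S : ℕ) (hS : 3 ≤ S)
    (B : Matrix (Fin S) (Fin (S + 1)) ℝ)
    (hB : ∀ i j, B i j =
      if (i : ℕ) + 1 < S then
        (if (j : ℕ) = (i : ℕ) then 1
          else if (j : ℕ) = (i : ℕ) + 1 then -2
          else if (j : ℕ) = (i : ℕ) + 2 then 1 else 0)
      else
        (if (j : ℕ) = S - 1 then 1 else if (j : ℕ) = S then -2 else 0))
    (μ : Fin S → ℝ) (a : ℝ)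
    (h : B.transpose.mulVec μ = fun _ => a) :
    a = 0 ∧ μ = 0 := by
  set ν : ℕ → ℝ := fun n => if h : n < S then μ ⟨n, h⟩ else 0 with hν
  have key : ∀ j : Fin (S + 1), ∑ i : Fin S, B i j * μ i = a := by
    intro j
    have := congrFun h j
    simpa [Matrix.mulVec, dotProduct, Matrix.transpose_apply] using this
  have hB' : ∀ (i : Fin S) (j : Fin (S + 1)), B i j =
      (if (j : ℕ) = (i : ℕ) + 0 then (1 : ℝ) else 0)
      + (if (j : ℕ) = (i : ℕ) + 1 then (-2 : ℝ) else 0)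
      + (if (j : ℕ) = (i : ℕ) + 2 ∧ (i : ℕ) + 1 < S then (1 : ℝ) else 0) := by
    intro i j
    rw [hB]
    rcases lt_or_ge ((i : ℕ) + 1) S with hlt | hge
    · rw [if_pos hlt]
      split_ifs <;> (try (exfalso; omega)) <;> norm_num
    · rw [if_neg (by omega)]
      have hi : (i : ℕ) = S - 1 := by omega
      split_ifs <;> (try (exfalso; omega)) <;> norm_num
  have hcond : ∀ (i : Fin S) (j : Fin (S + 1)),
      (if (j : ℕ) = (i : ℕ) + 2 ∧ (i : ℕ) + 1 < S then (1 : ℝ) else 0)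
      = (if (j : ℕ) = (i : ℕ) + 2 then (1 : ℝ) else 0) := by
    intro i j
    have := j.isLt
    split_ifs <;> first | rfl | omega
  have E : ∀ j : Fin (S + 1),
      ν (j : ℕ) + (if 1 ≤ (j : ℕ) then -2 * ν ((j : ℕ) - 1) else 0)
        + (if 2 ≤ (j : ℕ) then ν ((j : ℕ) - 2) else 0) = a := by
    intro j
    have hj := j.isLt
    have hk := key j
    have step : ∑ i : Fin S, B i j * μ i =
        (∑ i : Fin S, if (j : ℕ) = (i : ℕ) + 0 then μ i else 0)
        + (∑ i : Fin S, if (j : ℕ) = (i : ℕ) + 1 then -2 * μ i else 0)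
        + (∑ i : Fin S, if (j : ℕ) = (i : ℕ) + 2 then μ i else 0) := by
      rw [← Finset.sum_add_distrib, ← Finset.sum_add_distrib]
      apply Finset.sum_congr rfl
      intro i _
      rw [hB' i j, hcond i j]
      split_ifs <;> ring
    rw [step, sum_ite_shift S (j : ℕ) 0 μ,
      sum_ite_shift S (j : ℕ) 1 (fun i => -2 * μ i),
      sum_ite_shift S (j : ℕ) 2 μ] at hk
    rw [← hk]
    congr 1
    · congr 1
      · by_cases hjS : (j : ℕ) < S
        · rw [dif_pos ⟨Nat.zero_le _, by omega⟩]
          simp only [hν, Nat.sub_zero]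
          rw [dif_pos hjS]
        · rw [dif_neg (by omega)]
          simp only [hν]
          rw [dif_neg hjS]
      · by_cases h1 : 1 ≤ (j : ℕ)
        · rw [if_pos h1, dif_pos ⟨h1, by omega⟩]
          simp only [hν]
          rw [dif_pos (by omega : (j : ℕ) - 1 < S)]
        · rw [if_neg h1, dif_neg (by omega)]
    · by_cases h2 : 2 ≤ (j : ℕ)
      · rw [if_pos h2, dif_pos ⟨h2, by omega⟩]
        simp only [hν]
        rw [dif_pos (by omega : (j : ℕ) - 2 < S)]
      · rw [if_neg h2, dif_neg (by omega)]
  have E0 : ν 0 = a := by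
    have h' := E ⟨0, by omega⟩
    rw [show ((⟨0, by omega⟩ : Fin (S + 1)) : ℕ) = 0 from rfl,
      if_neg (by omega), if_neg (by omega)] at h'
    simpa using h'
  have E1 : ν 1 + -2 * ν 0 = a := by
    have h' := E ⟨1, by omega⟩
    rw [show ((⟨1, by omega⟩ : Fin (S + 1)) : ℕ) = 1 from rfl,
      if_pos (by omega), if_neg (by omega)] at h'
    simpa using h' 
  have E2 : ∀ k, k + 2 ≤ S → ν (k + 2) + -2 * ν (k + 1) + ν k = a := by
    intro k hk
    have h' := E ⟨k + 2, by omega⟩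
    have hv : ((⟨k + 2, by omega⟩ : Fin (S + 1)) : ℕ) = k + 2 := rfl
    rw [hv, if_pos (by omega), if_pos (by omega)] at h'
    have e1 : k + 2 - 1 = k + 1 := rfl
    have e2 : k + 2 - 2 = k := rfl
    rw [e1, e2] at h'
    exact h'
  have formula : ∀ k, k ≤ S → ν k = a * (((k : ℝ) + 1) * ((k : ℝ) + 2) / 2) := by
    intro k
    induction k using Nat.strong_induction_on with
    | _ k ih =>
      intro hkS
      match k with
      | 0 => rw [E0]; norm_num
      | 1 =>
        have : ν 1 = a + 2 * ν 0 := by linarith [E1]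
        rw [this, E0]; push_cast; ring
      | (k + 2) =>
        have h2 := E2 k (by omega)
        have hk1 := ih (k + 1) (by omega) (by omega)
        have hk0 := ih k (by omega) (by omega)
        have : ν (k + 2) = a + 2 * ν (k + 1) - ν k := by linarith
        rw [this, hk1, hk0]; push_cast; ring
  have hνS : ν S = 0 := by rw [hν]; exact dif_neg (by omega)
  have hlast := E2 (S - 2) (by omega)
  have e1 : S - 2 + 2 = S := by omega
  have e2 : S - 2 + 1 = S - 1 := by omega
  rw [e1, e2, hνS, formula (S - 1) (by omega), formula (S - 2) (by omega)] at hlast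
  have c1 : ((S - 1 : ℕ) : ℝ) = (S : ℝ) - 1 := by
    push_cast [Nat.cast_sub (by omega : 1 ≤ S)]; ring
  have c2 : ((S - 2 : ℕ) : ℝ) = (S : ℝ) - 2 := by
    push_cast [Nat.cast_sub (by omega : 2 ≤ S)]; ring
  rw [c1, c2] at hlast
  have hS3 : (3 : ℝ) ≤ (S : ℝ) := by exact_mod_cast hS
  have ha : a = 0 := by nlinarith [sq_nonneg ((S : ℝ))]
  refine ⟨ha, ?_⟩
  funext i
  have hf := formula (i : ℕ) (by omega)
  rw [ha] at hf
  have hi : ν (i : ℕ) = μ i := by simp [hν, i.isLt]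
  rw [hi] at hf
  simpa using hf
end

section
/- Let S ≥ 3 be an integer and p(0), …, p(S) reals with p(i) > 0 for every i and Σ_{k=0}^S p(k) = 1. Let Σ₀ be the (S+1)×(S+1) real matrix with entry (i+1, j+1) equal to 1_{i=j} p(i) − p(i)p(j) for i, j = 0, …, S, and let B be the S × (S+1) real matrix whose j-th row, for j = 1, …, S−1, has entries 1, −2, 1 in columns j, j+1, j+2 respectively and zeros elsewhere, and whose S-th row has all entries zero except the entries in columns S and S+1, which equal 1 and −2 respectively. Then the S × S matrix V = B Σ₀ Bᵀ is invertible. -/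
/-!
`Σ₀ = diag p - p pᵀ` is the covariance matrix of a multinomial draw: its quadratic form is
`yᵀ Σ₀ y = ∑ p i (y i - ∑ p j y j)²`, so for `p > 0` it vanishes only on constant vectors. Hence `V x = 0`
forces `Bᵀ x = c 𝟙`. Pairing with `v j = j - (S + 1)`, which `B` annihilates and whose entries
are all negative, gives `c = 0`; and `Bᵀ` is injective because the first `S` columns of `B`
form a unitriangular matrix.
-/

open Finset Matrix

theorem dotProduct_diagonal_sub_vecMulVec_mulVec {ι R : Type*} [Fintype ι] [DecidableEq ι]
    [CommRing R] (p y : ι → R)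
    (hp : ∑ i, p i = 1) :
    y ⬝ᵥ (diagonal p - vecMulVec p p) *ᵥ y = ∑ i, p i * (y i - p ⬝ᵥ y) ^ 2 := by
  have hexpand : ∀ i, p i * (y i - p ⬝ᵥ y) ^ 2
      = y i * (p i * y i) - 2 * (p ⬝ᵥ y) * (p i * y i) + (p ⬝ᵥ y) ^ 2 * p i :=
    fun i => by ring
  simp only [hexpand, sum_add_distrib, sum_sub_distrib, ← mul_sum, hp, sub_mulVec,
    vecMulVec_mulVec, dotProduct_sub, dotProduct_smul, dotProduct_comm y p, op_smul_eq_mul]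
  simp only [dotProduct, mulVec_diagonal]
  ring

theorem eq_of_sum_mul_sq_sub_eq_zero {ι : Type*} [Fintype ι] {p y : ι → ℝ} {c : ℝ}
    (hp : ∀ i, 0 < p i) (h : ∑ i, p i * (y i - c) ^ 2 = 0) (i : ι) : y i = c := by
  have hi := (sum_eq_zero_iff_of_nonneg fun j _ => by have := hp j; positivity).1 h i (mem_univ i)
  simpa [(hp i).ne', sub_eq_zero] using hi

theorem sum_ite_val_eq_mul {n : ℕ} (w : ℕ → ℝ) {a : ℕ} (ha : a ≤ n) (hw : w n = 0) :
    ∑ j : Fin n, (if (j : ℕ) = a then 1 else 0) * w j = w a := by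
  rw [Fin.sum_univ_eq_sum_range (fun k => (if k = a then 1 else 0) * w k)]
  simp only [ite_mul, one_mul, zero_mul, sum_ite_eq', mem_range]
  split_ifs with h
  · rfl
  · rw [show a = n by omega, hw]

/-- In the last row the column `i + 2 = S + 1` does not exist, which truncates it to `1, -2`. -/
def secondDiff (S : ℕ) : Matrix (Fin S) (Fin (S + 1)) ℝ :=
  of fun i j => (if (j : ℕ) = i then 1 else 0) - 2 * (if (j : ℕ) = i + 1 then 1 else 0)
    + (if (j : ℕ) = i + 2 then 1 else 0)

namespace secondDiff

variable {S : ℕ}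

theorem mulVec_apply (w : ℕ → ℝ) (hw : w (S + 1) = 0) (i : Fin S) :
    (secondDiff S *ᵥ fun j => w j) i = w i - 2 * w (i + 1) + w (i + 2) := by
  have hi := i.isLt
  simp only [mulVec, dotProduct, secondDiff, of_apply, add_mul, sub_mul, mul_assoc,
    sum_add_distrib, sum_sub_distrib, ← mul_sum]
  iterate 3 rw [sum_ite_val_eq_mul w (by omega) hw]

theorem mulVec_affine : secondDiff S *ᵥ (fun j => (j : ℝ) - (S + 1)) = 0 := by
  ext i
  rw [mulVec_apply (fun k => (k : ℝ) - (S + 1)) (by simp), Pi.zero_apply]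
  push_cast
  ring

theorem isUpperTriangular_submatrix_castSucc :
    ((secondDiff S).submatrix id Fin.castSucc).IsUpperTriangular := by
  intro i j hji
  have : (j : ℕ) < i := hji
  simp only [submatrix_apply, id, secondDiff, of_apply, Fin.val_castSucc]
  split_ifs <;> first | omega | norm_num

theorem det_submatrix_castSucc : ((secondDiff S).submatrix id Fin.castSucc).det = 1 := by
  rw [det_of_isUpperTriangular isUpperTriangular_submatrix_castSucc]
  refine prod_eq_one fun i _ => ?_
  simp [secondDiff]

theorem eq_zero_of_vecMul_eq_const {x : Fin S → ℝ} {c : ℝ}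
    (hx : x ᵥ* secondDiff S = Function.const _ c) : x = 0 := by
  have hc : c = 0 := by
    have hsum : c * ∑ j : Fin (S + 1), ((j : ℝ) - (S + 1)) = 0 := by
      rw [← dotProduct_zero x, ← mulVec_affine, dotProduct_mulVec, hx]
      simp only [dotProduct, Function.const_apply, mul_sum]
    have hneg : ∑ j : Fin (S + 1), ((j : ℝ) - (S + 1)) < 0 :=
      sum_neg (fun j _ => sub_neg.2 (by exact_mod_cast j.isLt)) univ_nonempty
    exact (mul_eq_zero.1 hsum).resolve_right hneg.ne
  refine eq_zero_of_vecMul_eq_zero (det_submatrix_castSucc (S := S) ▸ one_ne_zero) ?_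
  ext j
  exact (congr_fun hx j.castSucc).trans hc

end secondDiff

theorem V_invertible_general
    (S : ℕ) (p : Fin (S + 1) → ℝ)
    (hp_pos : ∀ i, 0 < p i) (hp_sum : ∑ k, p k = 1)
    (Sig0 : Matrix (Fin (S + 1)) (Fin (S + 1)) ℝ)
    (hSig0 : ∀ i j, Sig0 i j = (if i = j then p i else 0) - p i * p j)
    (B : Matrix (Fin S) (Fin (S + 1)) ℝ)
    (hB : ∀ i j, B i j =
      if (i : ℕ) + 1 < S then
        (if (j : ℕ) = (i : ℕ) then 1
          else if (j : ℕ) = (i : ℕ) + 1 then -2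
          else if (j : ℕ) = (i : ℕ) + 2 then 1 else 0)
      else
        (if (j : ℕ) = S - 1 then 1 else if (j : ℕ) = S then -2 else 0)) :
    IsUnit (B * Sig0 * B.transpose) := by
  obtain rfl : B = secondDiff S := by
    ext i j
    have hi := i.isLt
    rw [hB]
    simp only [secondDiff, of_apply]
    split_ifs <;> first | omega | norm_num
  obtain rfl : Sig0 = diagonal p - vecMulVec p p := by
    ext i j
    simp [hSig0, diagonal_apply, vecMulVec_apply]
  rw [isUnit_iff_isUnit_det, isUnit_iff_ne_zero]
  intro hdet
  obtain ⟨x, hx_ne, hx⟩ := exists_mulVec_eq_zero_iff.2 hdet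
  set y := x ᵥ* secondDiff S
  have hquad : ∑ i, p i * (y i - p ⬝ᵥ y) ^ 2 = 0 := calc
    _ = y ⬝ᵥ (diagonal p - vecMulVec p p) *ᵥ y :=
      (dotProduct_diagonal_sub_vecMulVec_mulVec p y hp_sum).symm
    _ = x ⬝ᵥ (secondDiff S * (diagonal p - vecMulVec p p) * (secondDiff S)ᵀ) *ᵥ x := by
      rw [← mulVec_mulVec, ← mulVec_mulVec, mulVec_transpose, dotProduct_mulVec x]
    _ = 0 := by rw [hx, dotProduct_zero]
  exact hx_ne (secondDiff.eq_zero_of_vecMul_eq_const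
    (funext (eq_of_sum_mul_sq_sub_eq_zero hp_pos hquad)))

/-- Let `S ≥ 3`, `p 0, …, p S` positive reals summing to 1, `Sig0`
the matrix with entries `1_{i=j} p i − p i * p j`, and `B` the `S × (S+1)`
second-difference matrix. Then `V = B Sig0 Bᵀ` is invertible. -/
theorem V_invertible
    (S : ℕ) (hS : 3 ≤ S) (p : Fin (S + 1) → ℝ)
    (hp_pos : ∀ i, 0 < p i) (hp_sum : ∑ k, p k = 1)
    (Sig0 : Matrix (Fin (S + 1)) (Fin (S + 1)) ℝ)
    (hSig0 : ∀ i j, Sig0 i j = (if i = j then p i else 0) - p i * p j)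
    (B : Matrix (Fin S) (Fin (S + 1)) ℝ)
    (hB : ∀ i j, B i j =
      if (i : ℕ) + 1 < S then
        (if (j : ℕ) = (i : ℕ) then 1
          else if (j : ℕ) = (i : ℕ) + 1 then -2
          else if (j : ℕ) = (i : ℕ) + 2 then 1 else 0)
      else
        (if (j : ℕ) = S - 1 then 1 else if (j : ℕ) = S then -2 else 0)) :
    IsUnit (B * Sig0 * B.transpose) :=
  V_invertible_general S p hp_pos hp_sum Sig0 hSig0 B hB
end

section
/- Let d be a positive integer, K a non-empty closed convex subset of ℝ^d, Φ(u) the unique minimizer of g ↦ ‖g − u‖ over g ∈ K, and for t ≥ 0 set A_t = {u ∈ ℝ^d : ‖u − Φ(u)‖ ≤ t}. Let μ be a Borel probability measure on ℝ^d that is log-concave in the following sense: for every λ ∈ (0,1), all Borel sets A, B ⊆ ℝ^d, and every Borel set C ⊇ λA + (1−λ)B, one has μ(C) ≥ μ(A)^λ μ(B)^{1−λ}. Then the function F(t) = μ(A_t) satisfies F(λ t + (1−λ) t') ≥ F(t)^λ F(t')^{1−λ} for all λ ∈ (0,1) and all t, t' ∈ [0,∞); that is, log F is concave on [0,∞) wherever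 F > 0. -/
open Pointwise MeasureTheory

/-- Let `K` be a non-empty closed convex subset of `ℝ^d`, `Φ u`
the (unique) minimizer of `g ↦ ‖g − u‖` over `g ∈ K`, and for `t ≥ 0` let
`A_t = {u : ‖u − Φ u‖ ≤ t}`. Let `μ` be a Borel probability measure on `ℝ^d`
which is log-concave: for `λ ∈ (0,1)`, Borel sets `A, B`, and any Borel
`C ⊇ λ A + (1−λ) B`, one has `μ C ≥ (μ A)^λ (μ B)^{1−λ}`. Then
`F t = μ (A_t)` satisfies `F (λ t + (1−λ) t') ≥ (F t)^λ (F t')^{1−λ}` for all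
`λ ∈ (0,1)` and `t, t' ∈ [0,∞)`. -/
theorem F_log_concave
    (d : ℕ) (hd : 0 < d)
    (K : Set (EuclideanSpace ℝ (Fin d)))
    (hK_ne : K.Nonempty) (hK_closed : IsClosed K) (hK_convex : Convex ℝ K)
    (Φ : EuclideanSpace ℝ (Fin d) → EuclideanSpace ℝ (Fin d))
    (hΦ : ∀ u, Φ u ∈ K ∧ ∀ g ∈ K, ‖Φ u - u‖ ≤ ‖g - u‖)
    (μ : Measure (EuclideanSpace ℝ (Fin d))) [IsProbabilityMeasure μ]
    (hlog : ∀ l : ℝ, 0 < l → l < 1 →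
      ∀ A B C : Set (EuclideanSpace ℝ (Fin d)),
        MeasurableSet A → MeasurableSet B → MeasurableSet C →
        l • A + (1 - l) • B ⊆ C →
        μ A ^ l * μ B ^ (1 - l) ≤ μ C) :
    ∀ l : ℝ, 0 < l → l < 1 → ∀ t t' : ℝ, 0 ≤ t → 0 ≤ t' →
      μ {u | ‖u - Φ u‖ ≤ t} ^ l * μ {u | ‖u - Φ u‖ ≤ t'} ^ (1 - l) ≤
        μ {u | ‖u - Φ u‖ ≤ l * t + (1 - l) * t'} := by

  -- `‖u - Φ u‖` is the distance from `u` to `K`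
  have hdist : ∀ u, ‖u - Φ u‖ = Metric.infDist u K := by
    intro u
    have h1 : Metric.infDist u K ≤ ‖u - Φ u‖ := by
      have := Metric.infDist_le_dist_of_mem (x := u) (hΦ u).1
      simpa [dist_eq_norm] using this
    have h2 : ‖u - Φ u‖ ≤ Metric.infDist u K := by
      apply le_of_forall_gt_imp_ge_of_dense
      intro c hc
      obtain ⟨g, hg, hgc⟩ := (Metric.infDist_lt_iff hK_ne).mp hc
      have := (hΦ u).2 g hg
      rw [dist_eq_norm] at hgc
      calc ‖u - Φ u‖ = ‖Φ u - u‖ := by rw [norm_sub_rev]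
        _ ≤ ‖g - u‖ := this
        _ = ‖u - g‖ := by rw [norm_sub_rev]
        _ ≤ c := hgc.le
    linarith
  have hmeas : ∀ s : ℝ, MeasurableSet {u : EuclideanSpace ℝ (Fin d) | ‖u - Φ u‖ ≤ s} := by
    intro s
    have : {u : EuclideanSpace ℝ (Fin d) | ‖u - Φ u‖ ≤ s}
        = {u | Metric.infDist u K ≤ s} := by
      ext u; simp [hdist u]
    rw [this]
    exact (isClosed_le (Metric.continuous_infDist_pt K) continuous_const).measurableSet
  intro l hl0 hl1 t t' ht ht'
  apply hlog l hl0 hl1 _ _ _ (hmeas t) (hmeas t') (hmeas _)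
  rintro w ⟨a, ⟨u, hu, rfl⟩, b, ⟨v, hv, rfl⟩, rfl⟩
  simp only [Set.mem_setOf_eq] at hu hv ⊢
  rw [hdist]
  have hK : l • Φ u + (1 - l) • Φ v ∈ K :=
    hK_convex (hΦ u).1 (hΦ v).1 hl0.le (by linarith) (by ring)
  calc Metric.infDist (l • u + (1 - l) • v) K
      ≤ dist (l • u + (1 - l) • v) (l • Φ u + (1 - l) • Φ v) :=
        Metric.infDist_le_dist_of_mem hK
    _ = ‖l • (u - Φ u) + (1 - l) • (v - Φ v)‖ := by
        rw [dist_eq_norm]; congr 1; module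
    _ ≤ ‖l • (u - Φ u)‖ + ‖(1 - l) • (v - Φ v)‖ := norm_add_le _ _
    _ = l * ‖u - Φ u‖ + (1 - l) * ‖v - Φ v‖ := by
        rw [norm_smul, norm_smul, Real.norm_eq_abs, Real.norm_eq_abs,
          abs_of_pos hl0, abs_of_pos (by linarith)]
    _ ≤ l * t + (1 - l) * t' := by
        have h1 : (0:ℝ) < 1 - l := by linarith
        gcongr
end
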